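/- Let A = (Q, E, s, F) be a Wheeler r-GNFA, let ≤ be a Wheeler order on A, and let α ∈ Σ* with α ≠ ε. Let h* be defined as in the context. Then |G^≺_⊣(α)| ≥ h*. -/

import Mathlib

/-- Strict co-lexicographic order: `α ≺ β` iff `α.reverse` is lexicographically
smaller than `β.reverse`. The empty string is the minimum. -/
def ColexLt {σ : Type*} [LinearOrder σ] (α β : List σ) : Prop :=
  List.Lex (· < ·) α.reverse β.reverse

/-- Non-strict co-lexicographic order `α ≼ β`. -/
def ColexLe {σ : Type*} [LinearOrder σ] (α β : List σ) : Prop :=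
  ColexLt α β ∨ α = β

/-- `α` is a strict suffix of `β`. -/
def IsStrictSuffix {σ : Type*} (α β : List σ) : Prop :=
  α <:+ β ∧ α ≠ β

/-- `p(α, k)`: the prefix of `α` of length `k`. -/
def pref {σ : Type*} (α : List σ) (k : ℕ) : List σ := α.take k

/-- `s(α, k)`: the suffix of `α` of length `k`. -/
def suff {σ : Type*} (α : List σ) (k : ℕ) : List σ := α.drop (α.length - k)

/-- The 1-based rank of a state in a finite linear order: `rankQ u = i` means
`u = Q[i]` in the enumeration `Q[1] < Q[2] < ⋯ < Q[|Q|]`. -/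
noncomputable def rankQ {Q : Type*} [Fintype Q] [LinearOrder Q] (u : Q) : ℕ :=
  {v : Q | v ≤ u}.ncard

/-- `Q[i, j] = {Q[i], …, Q[j]}` (empty if `i > j`). -/
def Qiv (Q : Type*) [Fintype Q] [LinearOrder Q] (i j : ℕ) : Set Q :=
  {u | i ≤ rankQ u ∧ rankQ u ≤ j}

/-- A generalized nondeterministic finite automaton: a finite set of
string-labeled edges `E ⊆ Q × Q × Σ*`, an initial state `s`, final states `F`. -/
structure GNFA (σ Q : Type*) where
  E : Finset (Q × Q × List σ)
  s : Q
  F : Finset Q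

namespace GNFA

variable {σ Q : Type*}

/-- `I A u β` means `β ∈ I_u`: `β` is obtained by concatenating the edge labels
along some path from `s` to `u` (in particular `ε ∈ I_s`). -/
inductive I (A : GNFA σ Q) : Q → List σ → Prop
  | base : I A A.s []
  | step {u v : Q} {α ρ : List σ} : I A u α → (u, v, ρ) ∈ A.E → I A v (α ++ ρ)

/-- Reachability along edges. -/
def Reach (A : GNFA σ Q) : Q → Q → Prop :=
  Relation.ReflTransGen (fun x y => ∃ ρ, (x, y, ρ) ∈ A.E)

/-- Every state is reachable from the initial state and is co-reachable
(final or allows reaching a final state). -/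
def Standard (A : GNFA σ Q) : Prop :=
  (∀ u, A.Reach A.s u) ∧ ∀ u, ∃ f ∈ A.F, A.Reach u f

/-- An ε-walk from `u` to `v`: a (possibly empty) sequence of ε-labeled edges. -/
def EpsWalk (A : GNFA σ Q) : Q → Q → Prop :=
  Relation.ReflTransGen (fun x y => (x, y, ([] : List σ)) ∈ A.E)

/-- An `r`-GNFA: all edge labels have length at most `r`. -/
def Bounded (A : GNFA σ Q) (r : ℕ) : Prop := ∀ e ∈ A.E, e.2.2.length ≤ r

/-- A GNFA without ε-transitions: every edge label is nonempty. -/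
def NoEps (A : GNFA σ Q) : Prop := ∀ e ∈ A.E, e.2.2 ≠ []

/-- `λ(u)`: the set of strings labeling some edge entering `u`. -/
def lab (A : GNFA σ Q) (u : Q) : Set (List σ) := {ρ | ∃ u', (u', u, ρ) ∈ A.E}

/-- `G_⊣(α)`: states `u` such that some `β ∈ I_u` has `α` as a suffix. -/
def Gsuf (A : GNFA σ Q) (α : List σ) : Set Q := {u | ∃ β, I A u β ∧ α <:+ β}

/-- `G*(α)`: states reached by an edge whose label has `α` as a suffix. -/
def Gstar (A : GNFA σ Q) (α : List σ) : Set Q := {u | ∃ ρ ∈ A.lab u, α <:+ ρ}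

section Colex
variable [LinearOrder σ]

/-- The preorder `u ≼_A v`. -/
def Preceq (A : GNFA σ Q) (u v : Q) : Prop :=
  ∀ α β, I A u α → I A v β →
    ¬((I A u α ∧ I A v α) ∧ (I A u β ∧ I A v β)) → ColexLt α β

/-- `G^≺(α)`: states `u` such that every `β ∈ I_u` satisfies `β ≺ α`. -/
def Gprec (A : GNFA σ Q) (α : List σ) : Set Q := {u | ∀ β, I A u β → ColexLt β α}

/-- `G^≺_⊣(α) = G^≺(α) ∪ G_⊣(α)`. -/
def GprecSuf (A : GNFA σ Q) (α : List σ) : Set Q := A.Gprec α ∪ A.Gsuf α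

/-- The linear order on `Q` is a Wheeler order on `A` (Axioms 1–4). -/
def IsWheeler [LinearOrder Q] (A : GNFA σ Q) : Prop :=
  (∀ u v : Q, u ≤ v → A.Preceq u v) ∧
  (∀ u : Q, A.s ≤ u) ∧
  (∀ u' u v' v : Q, ∀ ρ ρ' : List σ, (u', u, ρ) ∈ A.E → (v', v, ρ') ∈ A.E →
      u < v → ¬IsStrictSuffix ρ' ρ → ColexLe ρ ρ') ∧
  (∀ u' u v' v : Q, ∀ ρ : List σ, (u', u, ρ) ∈ A.E → (v', v, ρ) ∈ A.E →
      u < v → u' ≤ v')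

end Colex

section Indexed
variable [Fintype Q] [LinearOrder Q]

/-- `out(Q[1, m], ρ)`: number of edges labeled `ρ` leaving states in `Q[1, m]`. -/
noncomputable def outC (A : GNFA σ Q) (m : ℕ) (ρ : List σ) : ℕ :=
  {e : Q × Q × List σ | e ∈ A.E ∧ rankQ e.1 ≤ m ∧ e.2.2 = ρ}.ncard

/-- `in(Q[1, m], ρ)`: number of edges labeled `ρ` entering states in `Q[1, m]`. -/
noncomputable def inC (A : GNFA σ Q) (m : ℕ) (ρ : List σ) : ℕ :=
  {e : Q × Q × List σ | e ∈ A.E ∧ rankQ e.2.1 ≤ m ∧ e.2.2 = ρ}.ncard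

/-- `A_max[i]`: the largest `j` such that there is an ε-walk from `Q[j]` to `Q[i]`. -/
noncomputable def Amax (A : GNFA σ Q) (i : ℕ) : ℕ :=
  sSup {j | ∃ u v : Q, rankQ u = i ∧ rankQ v = j ∧ A.EpsWalk v u}

/-- `A_min[i]`: the smallest `j` such that there is an ε-walk from `Q[j]` to `Q[i]`. -/
noncomputable def Amin (A : GNFA σ Q) (i : ℕ) : ℕ :=
  sInf {j | ∃ u v : Q, rankQ u = i ∧ rankQ v = j ∧ A.EpsWalk v u}

variable [LinearOrder σ]

/-- `f_k = out(Q[1, |G^≺(p(α, |α|−k))|], s(α, k))`. -/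
noncomputable def fk (A : GNFA σ Q) (α : List σ) (k : ℕ) : ℕ :=
  A.outC ((A.Gprec (pref α (α.length - k))).ncard) (suff α k)

/-- `g_k = out(Q[1, |G^≺_⊣(p(α, |α|−k))|], s(α, k))`. -/
noncomputable def gk (A : GNFA σ Q) (α : List σ) (k : ℕ) : ℕ :=
  A.outC ((A.GprecSuf (pref α (α.length - k))).ncard) (suff α k)

/-- The property defining `j*` in Lemmas 2 and 4 (largest `j` satisfying it):
(i) `in(Q[1, j], s(α, k)) ≤ f_k` for every `0 < k < min{r+1, |α|}`; and
(ii) `ρ ≺ α` for every `ρ ∈ Σ^k ∩ λ(Q[h])`, every `1 ≤ h ≤ j`, every `0 < k < r+1`. -/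
def Jcond (A : GNFA σ Q) (r : ℕ) (α : List σ) (j : ℕ) : Prop :=
  (∀ k, 0 < k → k < min (r + 1) α.length → A.inC j (suff α k) ≤ A.fk α k) ∧
  (∀ k, 0 < k → k < r + 1 → ∀ h, 1 ≤ h → h ≤ j → ∀ u : Q, rankQ u = h →
      ∀ ρ : List σ, ρ.length = k → ρ ∈ A.lab u → ColexLt ρ α)

/-- The property defining `i*` (largest `i ≤ |Q|` satisfying it):
if `i ≥ 1` then `Q[i] ∈ G*(α)`. -/
def Icond (A : GNFA σ Q) (α : List σ) (i : ℕ) : Prop :=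
  1 ≤ i → ∃ u : Q, rankQ u = i ∧ u ∈ A.Gstar α

/-- The property defining `j°` (smallest `j ≤ |Q|` satisfying it):
`in(Q[1, j], s(α, k)) ≥ g_k` for every `0 < k < min{r+1, |α|}` with `g_k > f_k`. -/
def Jcond2 (A : GNFA σ Q) (r : ℕ) (α : List σ) (j : ℕ) : Prop :=
  ∀ k, 0 < k → k < min (r + 1) α.length → A.fk α k < A.gk α k →
    A.gk α k ≤ A.inC j (suff α k)

end Indexed

end GNFA
/-!
By Axiom 1, `G^≺(α)` and `G^≺_⊣(α)` are initial segments of the Wheeler order, so a state lies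
in one of them iff its rank is at most its size. Hence `i* ≤ |G^≺_⊣(α)|`, because
`G*(α) ⊆ G_⊣(α)`. For `j°`, write `α = pρ` with `ρ = s(α, k)`. If `g_k > f_k`, some `ρ`-edge
goes from `G_⊣(p) \ G^≺(p)` into `G_⊣(α)`. A `ρ`-edge from `G^≺(p)` to a state outside
`G^≺_⊣(α)` ends above that edge's target, so by Axiom 4 it starts at or above that edge's
source, hence outside `G^≺(p)`. So all `g_k` edges labelled `ρ` leaving `G^≺_⊣(p)` enter
`G^≺_⊣(α)`, and the minimality of `j°` gives `j° ≤ |G^≺_⊣(α)|`.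
-/

namespace List

variable {α : Type*} [LinearOrder α]

theorem lt_of_lt_of_prefix_of_not_prefix {a b d : List α} (h : b < d) (had : a <+: d)
    (hab : ¬ a <+: b) : b < a := by
  induction a generalizing b d with
  | nil => exact absurd nil_prefix hab
  | cons x a ih =>
    obtain ⟨t, rfl⟩ := had
    cases b with
    | nil => exact nil_lt_cons x a
    | cons y b =>
      rcases cons_lt_cons_iff.mp h with hyx | ⟨rfl, hbd⟩
      · exact cons_lt_cons_iff.mpr (Or.inl hyx)
      · exact cons_lt_cons_iff.mpr
          (Or.inr ⟨rfl, ih hbd ⟨t, rfl⟩ fun hp => hab (cons_prefix_cons.mpr ⟨rfl, hp⟩)⟩)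

end List

section Colex

variable {σ : Type*} [LinearOrder σ]

theorem colexLt_iff_reverse_lt {a b : List σ} : ColexLt a b ↔ a.reverse < b.reverse := Iff.rfl

theorem ColexLt.trans {a b c : List σ} (hab : ColexLt a b) (hbc : ColexLt b c) :
    ColexLt a c :=
  lt_trans (colexLt_iff_reverse_lt.mp hab) hbc

theorem ColexLt.of_suffix_of_not_suffix {a b d : List σ} (h : ColexLt b d) (had : a <:+ d)
    (hab : ¬ a <:+ b) : ColexLt b a :=
  List.lt_of_lt_of_prefix_of_not_prefix h (List.reverse_prefix.mpr had)
    fun hp => hab (List.reverse_prefix.mp hp)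

end Colex

theorem rankQ_le_ncard_iff {Q : Type*} [Fintype Q] [LinearOrder Q] {S : Set Q}
    (hS : IsLowerSet S) {u : Q} : rankQ u ≤ S.ncard ↔ u ∈ S := by
  refine ⟨fun h => ?_, fun hu => Set.ncard_le_ncard fun v hv => hS hv hu⟩
  by_contra hu
  have hS_lt : S ⊂ Set.Iic u :=
    Set.ssubset_iff_of_subset (fun v hv => le_of_not_ge fun huv => hu (hS huv hv)) |>.mpr
      ⟨u, le_rfl, hu⟩
  exact (Set.ncard_lt_ncard hS_lt).not_ge h

namespace GNFA

variable {σ Q : Type*}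

theorem exists_I_of_reach {A : GNFA σ Q} {u : Q} (h : A.Reach A.s u) : ∃ β, A.I u β := by
  induction h with
  | refl => exact ⟨[], I.base⟩
  | tail _ hstep ih =>
    obtain ⟨β, hβ⟩ := ih
    obtain ⟨ρ, he⟩ := hstep
    exact ⟨β ++ ρ, hβ.step he⟩

theorem Standard.exists_I {A : GNFA σ Q} (hA : A.Standard) (u : Q) : ∃ β, A.I u β :=
  exists_I_of_reach (hA.1 u)

theorem gstar_subset_gsuf {A : GNFA σ Q} (hA : A.Standard) (α : List σ) :
    A.Gstar α ⊆ A.Gsuf α := by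
  rintro u ⟨ρ, ⟨u', he⟩, hs⟩
  obtain ⟨β, hβ⟩ := hA.exists_I u'
  exact ⟨β ++ ρ, hβ.step he, List.suffix_append_of_suffix hs⟩

theorem mem_gsuf_append_of_edge {A : GNFA σ Q} {p ρ : List σ} {u v : Q}
    (he : (u, v, ρ) ∈ A.E) (hu : u ∈ A.Gsuf p) : v ∈ A.Gsuf (p ++ ρ) := by
  obtain ⟨β, hβ, hs⟩ := hu
  exact ⟨β ++ ρ, hβ.step he, List.suffix_append_self_iff.mpr hs⟩

section Counting

variable [Fintype Q] [LinearOrder Q] {A : GNFA σ Q}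

theorem outC_ncard_eq {S : Set Q} (hS : IsLowerSet S) (ρ : List σ) :
    A.outC S.ncard ρ = {e : Q × Q × List σ | e ∈ A.E ∧ e.1 ∈ S ∧ e.2.2 = ρ}.ncard := by
  simp only [outC, rankQ_le_ncard_iff hS]

theorem inC_ncard_eq {S : Set Q} (hS : IsLowerSet S) (ρ : List σ) :
    A.inC S.ncard ρ = {e : Q × Q × List σ | e ∈ A.E ∧ e.2.1 ∈ S ∧ e.2.2 = ρ}.ncard := by
  simp only [inC, rankQ_le_ncard_iff hS]

end Counting

section Wheeler

variable [LinearOrder σ]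

theorem Preceq.colexLt_or {A : GNFA σ Q} {u v : Q} (h : A.Preceq u v) {β δ : List σ}
    (hβ : A.I u β) (hδ : A.I v δ) : ColexLt β δ ∨ A.I v β ∧ A.I u δ := by
  by_cases hshared : (A.I u β ∧ A.I v β) ∧ (A.I u δ ∧ A.I v δ)
  · exact Or.inr ⟨hshared.1.2, hshared.2.1⟩
  · exact Or.inl (h β δ hβ hδ hshared)

variable [LinearOrder Q] {A : GNFA σ Q}

theorem isLowerSet_gprec (hA : A.Standard) (hW : A.IsWheeler) (α : List σ) :
    IsLowerSet (A.Gprec α) := by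
  intro v u huv hv β hβ
  obtain ⟨δ, hδ⟩ := hA.exists_I v
  rcases (hW.1 u v huv).colexLt_or hβ hδ with hβδ | ⟨hβv, -⟩
  · exact hβδ.trans (hv δ hδ)
  · exact hv β hβv

theorem isLowerSet_gprecSuf (hA : A.Standard) (hW : A.IsWheeler) (α : List σ) :
    IsLowerSet (A.GprecSuf α) := by
  intro v u huv hv
  by_cases hu : u ∈ A.Gsuf α
  · exact Or.inr hu
  rcases hv with hv | ⟨δ, hδ, hαδ⟩
  · exact Or.inl (isLowerSet_gprec hA hW α huv hv)
  · refine Or.inl fun β hβ => ?_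
    rcases (hW.1 u v huv).colexLt_or hβ hδ with hβδ | ⟨-, hδu⟩
    · exact hβδ.of_suffix_of_not_suffix hαδ fun hαβ => hu ⟨β, hβ, hαβ⟩
    · exact absurd ⟨δ, hδu, hαδ⟩ hu

theorem mem_gprecSuf_append_of_edge (hA : A.Standard) (hW : A.IsWheeler) {p ρ : List σ}
    {u₀ v₀ u v : Q} (he₀ : (u₀, v₀, ρ) ∈ A.E) (hu₀ : u₀ ∈ A.Gsuf p) (hu₀' : u₀ ∉ A.Gprec p)
    (he : (u, v, ρ) ∈ A.E) (hu : u ∈ A.GprecSuf p) : v ∈ A.GprecSuf (p ++ ρ) := by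
  rcases hu with hu | hu
  · by_contra hv
    have hv₀v : v₀ < v := lt_of_not_ge fun hvv₀ =>
      hv (isLowerSet_gprecSuf hA hW _ hvv₀ (Or.inr (mem_gsuf_append_of_edge he₀ hu₀)))
    exact hu₀' (isLowerSet_gprec hA hW p (hW.2.2.2 u₀ v₀ u v ρ he₀ he hv₀v) hu)
  · exact Or.inr (mem_gsuf_append_of_edge he hu)

variable [Fintype Q]

theorem gk_le_inC_of_fk_lt (hA : A.Standard) (hW : A.IsWheeler) {α : List σ} {k : ℕ}
    (hfg : A.fk α k < A.gk α k) : A.gk α k ≤ A.inC (A.GprecSuf α).ncard (suff α k) := by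
  have hα : pref α (α.length - k) ++ suff α k = α := List.take_append_drop _ _
  rw [fk, gk, outC_ncard_eq (isLowerSet_gprec hA hW _),
    outC_ncard_eq (isLowerSet_gprecSuf hA hW _)] at hfg
  obtain ⟨⟨u₀, v₀, _⟩, ⟨he₀, hu₀, rfl⟩, hnot⟩ := Set.exists_mem_notMem_of_ncard_lt_ncard hfg
  have hu₀' : u₀ ∉ A.Gprec (pref α (α.length - k)) := fun h => hnot ⟨he₀, h, rfl⟩
  rw [gk, outC_ncard_eq (isLowerSet_gprecSuf hA hW _),
    inC_ncard_eq (isLowerSet_gprecSuf hA hW _)]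
  refine Set.ncard_le_ncard ?_ (A.E.finite_toSet.subset fun e he => he.1)
  rintro ⟨u, v, _⟩ ⟨he, hu, rfl⟩
  refine ⟨he, ?_, rfl⟩
  rw [← hα]
  exact mem_gprecSuf_append_of_edge hA hW he₀ (hu₀.resolve_left hu₀') hu₀' he hu

end Wheeler

end GNFA

theorem gprecsuf_card_ge_hstar_general {σ Q : Type*} [LinearOrder σ]
    [Fintype Q] [LinearOrder Q] (A : GNFA σ Q)
    (hA : A.Standard) (hW : A.IsWheeler) (r : ℕ)
    (α : List σ) (istar : ℕ) (hi : A.Icond α istar) (jo : ℕ)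
    (hjo_min : ∀ j ≤ Fintype.card Q, A.Jcond2 r α j → jo ≤ j) :
    max (max (A.Gprec α).ncard istar) jo ≤ (A.GprecSuf α).ncard := by
  have hlower := GNFA.isLowerSet_gprecSuf hA hW α
  refine max_le (max_le (Set.ncard_le_ncard Set.subset_union_left) ?_) ?_
  · rcases Nat.eq_zero_or_pos istar with rfl | hpos
    · exact Nat.zero_le _
    obtain ⟨u, rfl, hu⟩ := hi hpos
    exact (rankQ_le_ncard_iff hlower).mpr (Or.inr (GNFA.gstar_subset_gsuf hA α hu))
  · refine hjo_min _ ?_ fun k _ _ hfg => GNFA.gk_le_inC_of_fk_lt hA hW hfg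
    simpa using Set.ncard_le_card (A.GprecSuf α)

/-- Let `A` be a Wheeler `r`-GNFA with Wheeler order `≤` and
`α ≠ ε`. With `i*`, `j°` and `h* = max{|G^≺(α)|, i*, j°}` as in the context,
`|G^≺_⊣(α)| ≥ h*`. -/
theorem gprecsuf_card_ge_hstar {σ Q : Type*} [Fintype σ] [LinearOrder σ]
    [Fintype Q] [LinearOrder Q] (A : GNFA σ Q)
    (hA : A.Standard) (hW : A.IsWheeler) (r : ℕ) (hr : A.Bounded r)
    (α : List σ) (hα : α ≠ [])
    (istar : ℕ) (hi_le : istar ≤ Fintype.card Q) (hi : A.Icond α istar)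
    (hi_max : ∀ i ≤ Fintype.card Q, A.Icond α i → i ≤ istar)
    (jo : ℕ) (hjo_le : jo ≤ Fintype.card Q) (hjo : A.Jcond2 r α jo)
    (hjo_min : ∀ j ≤ Fintype.card Q, A.Jcond2 r α j → jo ≤ j) :
    max (max (A.Gprec α).ncard istar) jo ≤ (A.GprecSuf α).ncard :=
  gprecsuf_card_ge_hstar_general A hA hW r α istar hi jo hjo_min
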